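/- Consider the networked system ẋ = −αx + Wf(x) on a convex set Ω ⊆ ℝⁿ with α > 0, W ∈ ℝ^{n×n}, and f continuously differentiable with Jacobian J_f. Fix k ∈ [1,n]. If ‖J_f(x)‖₂² · ∑_{i=1}^k σ_i²(W) < α²k for all x ∈ Ω, then the Jacobian J(x) = −αIₙ + W J_f(x) satisfies λ₁(J(x)+J(x)ᵀ) + ⋯ + λ_k(J(x)+J(x)ᵀ) < 0 for all x ∈ Ω (i.e., μ₂(J(x)^{[k]}) < 0, so the system is k-contractive). -/

import Mathlib

open Matrix

/-- The `k`th multiplicative compound of a matrix: the matrix of all `k × k` minors,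
indexed by the sets of `k` row indices and `k` column indices (taken in increasing order). -/
noncomputable def mulCompound (k : ℕ) {n m : ℕ} (A : Matrix (Fin n) (Fin m) ℝ) :
    Matrix {s : Finset (Fin n) // s.card = k} {s : Finset (Fin m) // s.card = k} ℝ :=
  fun r c =>
    (A.submatrix (fun i => ((r.1.orderIsoOfFin r.2) i : Fin n))
      (fun j => ((c.1.orderIsoOfFin c.2) j : Fin m))).det

/-- The `k`th additive compound: the derivative at `ε = 0` of `(I + ε A)^{(k)}`. -/
noncomputable def addCompound (k : ℕ) {n : ℕ} (A : Matrix (Fin n) (Fin n) ℝ) :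
    Matrix {s : Finset (Fin n) // s.card = k} {s : Finset (Fin n) // s.card = k} ℝ :=
  fun r c => deriv (fun ε : ℝ => mulCompound k (1 + ε • A) r c) 0

open scoped Classical in
/-- Eigenvalues of a symmetric real matrix, in decreasing order (junk value `0` otherwise). -/
noncomputable def symEigsDesc {n : ℕ} (S : Matrix (Fin n) (Fin n) ℝ) : Fin n → ℝ :=
  if hS : S.IsHermitian then
    fun i => (hS.eigenvalues ∘ Tuple.sort hS.eigenvalues) i.rev
  else 0

/-- Singular values of a real matrix in decreasing order. -/
noncomputable def singVals {m p : ℕ} (A : Matrix (Fin m) (Fin p) ℝ) : Fin p → ℝ :=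
  fun i => Real.sqrt (symEigsDesc (Aᴴ * A) i)

/-- Largest eigenvalue of a (symmetric) real matrix. -/
noncomputable def lamMax {n : ℕ} (S : Matrix (Fin n) (Fin n) ℝ) : ℝ :=
  if hn : 0 < n then symEigsDesc S ⟨0, hn⟩ else 0

/-! Young's inequality `2⟪u, w⟫ ≤ t⁻¹‖u‖² + t‖w‖²` with `u = Wᵀx`, `w = J_f x` gives, for every
`t > 0`, the quadratic-form bound `A + Aᵀ ≤ t⁻¹ W Wᵀ + t ‖J_f‖₂² I` for `A = W J_f`. By Weyl's
monotonicity principle it holds eigenvalue by eigenvalue, and `W Wᵀ`, `Wᵀ W` have the same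
eigenvalues `σ_i(W)²`. Summing the `k` largest eigenvalues of `J + Jᵀ = A + Aᵀ - 2αI` gives
`t⁻¹ ∑ σ_i(W)² + t k ‖J_f‖₂² - 2αk`, which is negative for a suitable `t` exactly when
`‖J_f‖₂² ∑ σ_i(W)² < α² k`. -/

open scoped RealInnerProductSpace

section Weyl

variable {E : Type*} [NormedAddCommGroup E] [InnerProductSpace ℝ E]

namespace OrthonormalBasis

variable {ι : Type*} [Fintype ι] (b : OrthonormalBasis ι ℝ E) {d : ι → ℝ} {c : ℝ} {x : E}

lemma mul_norm_sq_le_sum_mul_inner_sq (h : ∀ j, ⟪b j, x⟫ ≠ 0 → c ≤ d j) :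
    c * ‖x‖ ^ 2 ≤ ∑ j, d j * ⟪b j, x⟫ ^ 2 := by
  rw [← b.sum_sq_inner_right, Finset.mul_sum]
  refine Finset.sum_le_sum fun j _ => ?_
  by_cases hj : ⟪b j, x⟫ = 0
  · simp [hj]
  · exact mul_le_mul_of_nonneg_right (h j hj) (sq_nonneg _)

lemma sum_mul_inner_sq_le_mul_norm_sq (h : ∀ j, ⟪b j, x⟫ ≠ 0 → d j ≤ c) :
    ∑ j, d j * ⟪b j, x⟫ ^ 2 ≤ c * ‖x‖ ^ 2 := by
  rw [← b.sum_sq_inner_right, Finset.mul_sum]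
  refine Finset.sum_le_sum fun j _ => ?_
  by_cases hj : ⟪b j, x⟫ = 0
  · simp [hj]
  · exact mul_le_mul_of_nonneg_right (h j hj) (sq_nonneg _)

end OrthonormalBasis

lemma exists_ne_zero_inner_eq_zero_of_lt_of_gt {n : ℕ} [FiniteDimensional ℝ E]
    (hE : Module.finrank ℝ E = n) (b c : Fin n → E) (i : Fin n) :
    ∃ x ≠ 0, (∀ j, i < j → ⟪b j, x⟫ = 0) ∧ ∀ j, j < i → ⟪c j, x⟫ = 0 := by
  let L : E →ₗ[ℝ] ({j // j ≠ i} → ℝ) :=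
    LinearMap.pi fun j => if i < j.1 then innerₛₗ ℝ (b j) else innerₛₗ ℝ (c j)
  have hL : LinearMap.ker L ≠ ⊥ := LinearMap.ker_ne_bot_of_finrank_lt <| by
    rw [Module.finrank_fintype_fun_eq_card, hE]
    simpa using i.pos
  obtain ⟨x, hx, hx0⟩ := Submodule.exists_mem_ne_zero_of_ne_bot hL
  have hLx (j : Fin n) (hj : j ≠ i) := congrFun (LinearMap.mem_ker.1 hx) ⟨j, hj⟩
  refine ⟨x, hx0, fun j hj => ?_, fun j hj => ?_⟩
  · simpa [L, hj] using hLx j hj.ne'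
  · simpa [L, hj.not_gt] using hLx j hj.ne

/-- Weyl's monotonicity principle, by the Courant–Fischer dimension count. -/
theorem le_of_forall_sum_mul_inner_sq_le {n : ℕ} (b c : OrthonormalBasis (Fin n) ℝ E)
    {d e : Fin n → ℝ} (hd : Antitone d) (he : Antitone e)
    (h : ∀ x, ∑ j, d j * ⟪b j, x⟫ ^ 2 ≤ ∑ j, e j * ⟪c j, x⟫ ^ 2) (i : Fin n) : d i ≤ e i := by
  have : FiniteDimensional ℝ E := b.toBasis.finiteDimensional_of_finite
  obtain ⟨x, hx0, hb, hc⟩ := exists_ne_zero_inner_eq_zero_of_lt_of_gt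
    (by simpa using Module.finrank_eq_card_basis b.toBasis) b c i
  have lower := b.mul_norm_sq_le_sum_mul_inner_sq fun j hj => hd (not_lt.1 (mt (hb j) hj))
  have upper := c.sum_mul_inner_sq_le_mul_norm_sq fun j hj => he (not_lt.1 (mt (hc j) hj))
  exact le_of_mul_le_mul_right ((lower.trans (h x)).trans upper) (by positivity)

end Weyl

namespace Matrix

lemma dotProduct_mulVec_eq_sum_mul_inner_sq {ι : Type*} [Fintype ι] {S : Matrix ι ι ℝ}
    (b : OrthonormalBasis ι ℝ (EuclideanSpace ℝ ι)) {d : ι → ℝ}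
    (hb : ∀ j, S *ᵥ b j = d j • b j) (x : ι → ℝ) :
    x ⬝ᵥ S *ᵥ x = ∑ j, d j * ⟪b j, WithLp.toLp 2 x⟫ ^ 2 := by
  have hx : x = ∑ j, ⟪b j, WithLp.toLp 2 x⟫ • ⇑(b j) := by
    conv_lhs => rw [← WithLp.ofLp_toLp 2 x, ← b.sum_repr' (WithLp.toLp 2 x)]
    simp
  have hdot (j : ι) : x ⬝ᵥ b j = ⟪b j, WithLp.toLp 2 x⟫ := by
    simp [EuclideanSpace.inner_eq_star_dotProduct]
  have hSx : S *ᵥ x = ∑ j, (d j * ⟪b j, WithLp.toLp 2 x⟫) • ⇑(b j) := by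
    conv_lhs => rw [hx]
    simp only [mulVec_sum, mulVec_smul, hb, smul_smul, mul_comm]
  simp only [hSx, dotProduct_sum, dotProduct_smul, hdot, smul_eq_mul]
  simp only [sq, mul_assoc]

section SymEigsDesc

variable {n : ℕ} {S T : Matrix (Fin n) (Fin n) ℝ}

lemma symEigsDesc_antitone (S : Matrix (Fin n) (Fin n) ℝ) : Antitone (symEigsDesc S) := by
  rw [symEigsDesc]
  split
  · exact fun i j hij => Tuple.monotone_sort _ (Fin.rev_le_rev.2 hij)
  · exact antitone_const

lemma IsHermitian.exists_orthonormalBasis_mulVec_eq_symEigsDesc_smul (hS : S.IsHermitian) :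
    ∃ b : OrthonormalBasis (Fin n) ℝ (EuclideanSpace ℝ (Fin n)),
      ∀ j, S *ᵥ b j = symEigsDesc S j • b j := by
  refine ⟨hS.eigenvectorBasis.reindex (Fin.revPerm.trans (Tuple.sort hS.eigenvalues)).symm,
    fun j => ?_⟩
  rw [OrthonormalBasis.reindex_apply, hS.mulVec_eigenvectorBasis, symEigsDesc, dif_pos hS]
  rfl

lemma IsHermitian.symEigsDesc_eq_of_mulVec_eq_smul (hS : S.IsHermitian)
    (b : OrthonormalBasis (Fin n) ℝ (EuclideanSpace ℝ (Fin n))) {d : Fin n → ℝ}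
    (hd : Antitone d) (hb : ∀ j, S *ᵥ b j = d j • b j) : symEigsDesc S = d := by
  obtain ⟨c, hc⟩ := hS.exists_orthonormalBasis_mulVec_eq_symEigsDesc_smul
  have hsum (x : EuclideanSpace ℝ (Fin n)) :
      ∑ j, symEigsDesc S j * ⟪c j, x⟫ ^ 2 = ∑ j, d j * ⟪b j, x⟫ ^ 2 := by
    simpa using (dotProduct_mulVec_eq_sum_mul_inner_sq c hc x.ofLp).symm.trans
      (dotProduct_mulVec_eq_sum_mul_inner_sq b hb x.ofLp)
  funext i
  exact le_antisymm
    (le_of_forall_sum_mul_inner_sq_le c b (symEigsDesc_antitone S) hd (fun x => (hsum x).le) i)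
    (le_of_forall_sum_mul_inner_sq_le b c hd (symEigsDesc_antitone S) (fun x => (hsum x).ge) i)

lemma IsHermitian.symEigsDesc_le_of_dotProduct_mulVec_le (hS : S.IsHermitian)
    (hT : T.IsHermitian) (h : ∀ x, x ⬝ᵥ S *ᵥ x ≤ x ⬝ᵥ T *ᵥ x) (i : Fin n) :
    symEigsDesc S i ≤ symEigsDesc T i := by
  obtain ⟨b, hb⟩ := hS.exists_orthonormalBasis_mulVec_eq_symEigsDesc_smul
  obtain ⟨c, hc⟩ := hT.exists_orthonormalBasis_mulVec_eq_symEigsDesc_smul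
  refine le_of_forall_sum_mul_inner_sq_le b c (symEigsDesc_antitone S) (symEigsDesc_antitone T)
    (fun x => ?_) i
  simpa [dotProduct_mulVec_eq_sum_mul_inner_sq b hb, dotProduct_mulVec_eq_sum_mul_inner_sq c hc]
    using h x.ofLp

lemma IsHermitian.dotProduct_mulVec_le_symEigsDesc_mul (hS : S.IsHermitian) (hn : 0 < n)
    (x : Fin n → ℝ) : x ⬝ᵥ S *ᵥ x ≤ symEigsDesc S ⟨0, hn⟩ * (x ⬝ᵥ x) := by
  obtain ⟨b, hb⟩ := hS.exists_orthonormalBasis_mulVec_eq_symEigsDesc_smul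
  have hxx : x ⬝ᵥ x = ‖(WithLp.toLp 2 x : EuclideanSpace ℝ (Fin n))‖ ^ 2 := by
    rw [← real_inner_self_eq_norm_sq, EuclideanSpace.inner_eq_star_dotProduct]
    simp
  rw [dotProduct_mulVec_eq_sum_mul_inner_sq b hb, hxx]
  exact b.sum_mul_inner_sq_le_mul_norm_sq fun j _ =>
    symEigsDesc_antitone S (Fin.le_iff_val_le_val.2 (Nat.zero_le _))

lemma IsHermitian.symEigsDesc_smul_add_smul_one (hS : S.IsHermitian) {a : ℝ} (ha : 0 ≤ a)
    (c : ℝ) : symEigsDesc (a • S + c • 1) = fun i => a * symEigsDesc S i + c := by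
  obtain ⟨b, hb⟩ := hS.exists_orthonormalBasis_mulVec_eq_symEigsDesc_smul
  have hT : (a • S + c • 1).IsHermitian :=
    (hS.smul (IsSelfAdjoint.all a)).add (isHermitian_one.smul (IsSelfAdjoint.all c))
  refine hT.symEigsDesc_eq_of_mulVec_eq_smul b
    (fun i j hij => by simpa using mul_le_mul_of_nonneg_left (symEigsDesc_antitone S hij) ha)
    fun j => ?_
  rw [add_mulVec, smul_mulVec, smul_mulVec, one_mulVec, hb, smul_smul, add_smul]

lemma IsHermitian.symEigsDesc_eq_of_charpoly_eq (hS : S.IsHermitian) (hT : T.IsHermitian)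
    (h : S.charpoly = T.charpoly) : symEigsDesc S = symEigsDesc T := by
  simp only [symEigsDesc, dif_pos hS, dif_pos hT, (hS.eigenvalues_eq_eigenvalues_iff hT).2 h]

lemma PosSemidef.symEigsDesc_nonneg (hS : S.PosSemidef) (i : Fin n) : 0 ≤ symEigsDesc S i := by
  rw [symEigsDesc, dif_pos hS.1]
  exact hS.eigenvalues_nonneg _

end SymEigsDesc

lemma singVals_sq {m p : ℕ} (A : Matrix (Fin m) (Fin p) ℝ) (i : Fin p) :
    singVals A i ^ 2 = symEigsDesc (Aᵀ * A) i := by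
  rw [singVals, Real.sq_sqrt ((posSemidef_conjTranspose_mul_self A).symEigsDesc_nonneg i),
    conjTranspose_eq_transpose_of_trivial]

lemma dotProduct_mulVec_mul_add_transpose_le {m l : Type*} [Fintype m] [Fintype l]
    (W : Matrix m l ℝ) (J : Matrix l m ℝ) {t : ℝ} (ht : 0 < t) (x : m → ℝ) :
    x ⬝ᵥ (W * J + (W * J)ᵀ) *ᵥ x
      ≤ t⁻¹ * (x ⬝ᵥ (W * Wᵀ) *ᵥ x) + t * (x ⬝ᵥ (Jᵀ * J) *ᵥ x) := by
  set u := Wᵀ *ᵥ x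
  set w := J *ᵥ x
  have hWJ : x ⬝ᵥ (W * J) *ᵥ x = u ⬝ᵥ w := by
    rw [← mulVec_mulVec, dotProduct_mulVec, ← mulVec_transpose]
  have hWJt : x ⬝ᵥ (W * J)ᵀ *ᵥ x = x ⬝ᵥ (W * J) *ᵥ x := by
    rw [mulVec_transpose, dotProduct_comm, ← dotProduct_mulVec]
  have hWW : x ⬝ᵥ (W * Wᵀ) *ᵥ x = u ⬝ᵥ u := by
    rw [← mulVec_mulVec, dotProduct_mulVec, ← mulVec_transpose]
  have hJJ : x ⬝ᵥ (Jᵀ * J) *ᵥ x = w ⬝ᵥ w := by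
    rw [← mulVec_mulVec, dotProduct_mulVec, vecMul_transpose]
  have hsq : t⁻¹ * (u ⬝ᵥ u) + t * (w ⬝ᵥ w) - 2 * (u ⬝ᵥ w)
      = t⁻¹ * ((u - t • w) ⬝ᵥ (u - t • w)) := by
    simp only [sub_dotProduct, dotProduct_sub, smul_dotProduct, dotProduct_smul, smul_eq_mul,
      dotProduct_comm w u]
    field_simp
    ring
  rw [add_mulVec, dotProduct_add, hWJt, hWJ, hWW, hJJ]
  have hnonneg : 0 ≤ (u - t • w) ⬝ᵥ (u - t • w) := by
    simpa using dotProduct_star_self_nonneg (u - t • w)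
  linarith [mul_nonneg (inv_nonneg.2 ht.le) hnonneg]

lemma symEigsDesc_mul_add_transpose_le {n : ℕ} (W J : Matrix (Fin n) (Fin n) ℝ) (hn : 0 < n)
    {t : ℝ} (ht : 0 < t) (i : Fin n) :
    symEigsDesc (W * J + (W * J)ᵀ) i
      ≤ t⁻¹ * symEigsDesc (Wᵀ * W) i + t * symEigsDesc (Jᵀ * J) ⟨0, hn⟩ := by
  set β := symEigsDesc (Jᵀ * J) ⟨0, hn⟩
  have hWWt : (W * Wᵀ).IsHermitian := by simpa using isHermitian_mul_conjTranspose_self W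
  have hWtW : (Wᵀ * W).IsHermitian := by simpa using isHermitian_conjTranspose_mul_self W
  have hJtJ : (Jᵀ * J).IsHermitian := by simpa using isHermitian_conjTranspose_mul_self J
  have hWJ : (W * J + (W * J)ᵀ).IsHermitian := by simpa using isHermitian_add_transpose_self (W * J)
  have hquad (x : Fin n → ℝ) : x ⬝ᵥ (W * J + (W * J)ᵀ) *ᵥ x
      ≤ x ⬝ᵥ (t⁻¹ • (W * Wᵀ) + (t * β) • 1) *ᵥ x := calc
    _ ≤ t⁻¹ * (x ⬝ᵥ (W * Wᵀ) *ᵥ x) + t * (x ⬝ᵥ (Jᵀ * J) *ᵥ x) :=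
      dotProduct_mulVec_mul_add_transpose_le W J ht x
    _ ≤ t⁻¹ * (x ⬝ᵥ (W * Wᵀ) *ᵥ x) + t * (β * (x ⬝ᵥ x)) := by
      gcongr
      exact hJtJ.dotProduct_mulVec_le_symEigsDesc_mul hn x
    _ = x ⬝ᵥ (t⁻¹ • (W * Wᵀ) + (t * β) • 1) *ᵥ x := by
      simp only [add_mulVec, smul_mulVec, one_mulVec, dotProduct_add, dotProduct_smul, smul_eq_mul]
      ring
  calc symEigsDesc (W * J + (W * J)ᵀ) i
      ≤ symEigsDesc (t⁻¹ • (W * Wᵀ) + (t * β) • 1) i :=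
        hWJ.symEigsDesc_le_of_dotProduct_mulVec_le
          ((hWWt.smul (IsSelfAdjoint.all _)).add (isHermitian_one.smul (IsSelfAdjoint.all _)))
          hquad i
    _ = t⁻¹ * symEigsDesc (W * Wᵀ) i + t * β := by
        rw [hWWt.symEigsDesc_smul_add_smul_one (inv_nonneg.2 ht.le)]
    _ = t⁻¹ * symEigsDesc (Wᵀ * W) i + t * β := by
        rw [hWWt.symEigsDesc_eq_of_charpoly_eq hWtW (charpoly_mul_comm W Wᵀ)]

end Matrix

lemma exists_pos_inv_mul_add_mul_lt {a b c : ℝ} (ha : 0 ≤ a) (hb : 0 ≤ b) (hc : 0 < c)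
    (h : a * b < c ^ 2) : ∃ t > 0, t⁻¹ * a + t * b < 2 * c := by
  rcases hb.eq_or_lt with rfl | hb
  · refine ⟨(a + 1) / c, by positivity, ?_⟩
    rw [inv_div, mul_zero, add_zero, div_mul_eq_mul_div, div_lt_iff₀ (by positivity)]
    nlinarith
  · refine ⟨c / b, by positivity, ?_⟩
    have hlt : b / c * a < c := by
      rw [div_mul_eq_mul_div, div_lt_iff₀ hc]
      nlinarith
    rw [inv_div, div_mul_cancel₀ c hb.ne']
    linarith

theorem stmt18_general {n k : ℕ} (hk1 : 1 ≤ k) (hkn : k ≤ n)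
    (α : ℝ) (hα : 0 < α) (W : Matrix (Fin n) (Fin n) ℝ)
    (Ω : Set (Fin n → ℝ))
    (Jf : (Fin n → ℝ) → Matrix (Fin n) (Fin n) ℝ)
    (hsg : ∀ x ∈ Ω,
      (singVals (Jf x) ⟨0, hk1.trans hkn⟩) ^ 2 *
        ∑ i : Fin k, (singVals W (Fin.castLE hkn i)) ^ 2 < α ^ 2 * k) :
    ∀ x ∈ Ω,
      ∑ i : Fin k,
        symEigsDesc (((-α) • 1 + W * Jf x) + ((-α) • 1 + W * Jf x)ᵀ)
          (Fin.castLE hkn i) < 0 := by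
  intro x hx
  have hn : 0 < n := hk1.trans hkn
  have hk : (0 : ℝ) < k := by exact_mod_cast hk1
  set J := Jf x
  set β := symEigsDesc (Jᵀ * J) ⟨0, hn⟩
  set s := ∑ i : Fin k, symEigsDesc (Wᵀ * W) (Fin.castLE hkn i)
  have hβ : 0 ≤ β := by simpa using (posSemidef_conjTranspose_mul_self J).symEigsDesc_nonneg _
  have hs : 0 ≤ s := Finset.sum_nonneg fun i _ => by
    simpa using (posSemidef_conjTranspose_mul_self W).symEigsDesc_nonneg _
  have hβs : β * s < α ^ 2 * k := by simpa only [singVals_sq] using hsg x hx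
  obtain ⟨t, ht, hts⟩ := exists_pos_inv_mul_add_mul_lt hs (mul_nonneg hβ hk.le)
    (mul_pos hα hk) (by nlinarith)
  have hG (i : Fin n) : symEigsDesc (((-α) • 1 + W * J) + ((-α) • 1 + W * J)ᵀ) i
      ≤ t⁻¹ * symEigsDesc (Wᵀ * W) i + t * β - 2 * α := by
    have hsplit : (-α) • 1 + W * J + ((-α) • 1 + W * J)ᵀ
        = (1 : ℝ) • (W * J + (W * J)ᵀ) + (-(2 * α)) • 1 := by
      rw [transpose_add, transpose_smul, transpose_one, one_smul, two_mul, neg_add, add_smul]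
      abel
    have hWJ : (W * J + (W * J)ᵀ).IsHermitian := by
      simpa using isHermitian_add_transpose_self (W * J)
    rw [hsplit, hWJ.symEigsDesc_smul_add_smul_one zero_le_one]
    linarith [symEigsDesc_mul_add_transpose_le W J hn ht i]
  calc _ ≤ ∑ i : Fin k, (t⁻¹ * symEigsDesc (Wᵀ * W) (Fin.castLE hkn i) + t * β - 2 * α) :=
        Finset.sum_le_sum fun i _ => hG _
    _ = t⁻¹ * s + t * (β * k) - 2 * (α * k) := by
        simp only [Finset.sum_sub_distrib, Finset.sum_add_distrib, ← Finset.mul_sum,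
          Finset.sum_const, Finset.card_univ, Fintype.card_fin, nsmul_eq_mul, s]
        ring
    _ < 0 := by linarith

/-- Networked system `ẋ = -αx + W f(x)`: if `‖J_f(x)‖₂² ∑_{i=1}^k σ_i²(W) < α² k` on a
convex set `Ω`, then the Jacobian `J(x) = -αI + W J_f(x)` satisfies
`∑_{i=1}^k λ_i(J(x) + J(x)ᵀ) < 0` on `Ω` (so the system is `k`-contractive). -/
theorem stmt18 {n k : ℕ} (hk1 : 1 ≤ k) (hkn : k ≤ n)
    (α : ℝ) (hα : 0 < α) (W : Matrix (Fin n) (Fin n) ℝ)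
    (Ω : Set (Fin n → ℝ)) (hΩ : Convex ℝ Ω)
    (f : (Fin n → ℝ) → (Fin n → ℝ)) (hf : ContDiff ℝ 1 f)
    (Jf : (Fin n → ℝ) → Matrix (Fin n) (Fin n) ℝ)
    (hJf : ∀ x, HasFDerivAt f ((Jf x).mulVecLin.toContinuousLinearMap) x)
    (hsg : ∀ x ∈ Ω,
      (singVals (Jf x) ⟨0, hk1.trans hkn⟩) ^ 2 *
        ∑ i : Fin k, (singVals W (Fin.castLE hkn i)) ^ 2 < α ^ 2 * k) :
    ∀ x ∈ Ω,
      ∑ i : Fin k,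
        symEigsDesc (((-α) • 1 + W * Jf x) + ((-α) • 1 + W * Jf x)ᵀ)
          (Fin.castLE hkn i) < 0 :=
  stmt18_general hk1 hkn α hα W Ω Jf hsg
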